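/- arXiv:2403.19583 — 5 statements merged into one kernel-verified Lean document; each statement's English description precedes it below -/
import Mathlib

section
/- Let A be a uniform algebra on a compact Hausdorff space X. Suppose there is a dense subset F of A such that every function in F has a square root in A, and suppose the real-linear span of {log|f| : f invertible in A} is dense in the real-valued continuous functions on X. Then {log|f| : f invertible in A} itself is dense in the real-valued continuous functions on X. -/
open scoped ContinuousMap

/-- The set of real-valued continuous functions of the form `log |f|`
for `f` invertible in `A`. -/
def logAbsInvSet {X : Type*} [TopologicalSpace X] [CompactSpace X]
    (A : Subalgebra ℂ C(X, ℂ)) : Set C(X, ℝ) :=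
  {u | ∃ f ∈ A, (∃ g ∈ A, f * g = 1) ∧ ∀ x, u x = Real.log ‖f x‖}

lemma log_diff_le_aux {a b : ℝ} (ha : 0 < a) (hb : 0 < b) :
    |Real.log a - Real.log b| ≤ |a - b| / min a b := by
  have hmin : 0 < min a b := lt_min ha hb
  have h1 : Real.log a - Real.log b ≤ (a - b) / b := by
    rw [← Real.log_div (ne_of_gt ha) (ne_of_gt hb)]
    have := Real.log_le_sub_one_of_pos (div_pos ha hb)
    have h2 : a / b - 1 = (a - b) / b := by field_simp
    linarith [h2 ▸ this]
  have h2 : Real.log b - Real.log a ≤ (b - a) / a := by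
    rw [← Real.log_div (ne_of_gt hb) (ne_of_gt ha)]
    have := Real.log_le_sub_one_of_pos (div_pos hb ha)
    have h2 : b / a - 1 = (b - a) / a := by field_simp
    linarith [h2 ▸ this]
  have hb1 : (a - b) / b ≤ |a - b| / min a b :=
    div_le_div₀ (abs_nonneg _) (le_abs_self _) hmin (min_le_right a b)
  have hb2 : (b - a) / a ≤ |a - b| / min a b :=
    div_le_div₀ (abs_nonneg _) ((abs_sub_comm a b) ▸ le_abs_self (b - a)) hmin (min_le_left a b)
  rw [abs_le]
  constructor <;> linarith

lemma dyadic_dense_aux : Dense {x : ℝ | ∃ (n : ℤ) (k : ℕ), x = n / 2 ^ k} := by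
  intro x
  rw [Metric.mem_closure_iff]
  intro ε hε
  obtain ⟨k, hk⟩ := exists_pow_lt_of_lt_one hε (by norm_num : (1:ℝ)/2 < 1)
  refine ⟨(⌊x * 2 ^ k⌋ : ℝ) / 2 ^ k, ⟨⌊x * 2 ^ k⌋, k, rfl⟩, ?_⟩
  have h2k : (0:ℝ) < 2 ^ k := by positivity
  have h1 := Int.floor_le (x * 2 ^ k)
  have h2 := Int.lt_floor_add_one (x * 2 ^ k)
  have hu : x - (⌊x * 2 ^ k⌋ : ℝ) / 2 ^ k < (1/2)^k := by
    rw [div_pow, one_pow, sub_lt_iff_lt_add, ← add_div, lt_div_iff₀ h2k]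
    linarith
  have hl : 0 ≤ x - (⌊x * 2 ^ k⌋ : ℝ) / 2 ^ k := by
    rw [sub_nonneg, div_le_iff₀ h2k]; exact h1
  rw [Real.dist_eq, abs_lt]
  constructor <;> linarith

theorem stmt0 {X : Type*} [TopologicalSpace X] [CompactSpace X] [T2Space X]
    (A : Subalgebra ℂ C(X, ℂ))
    (hclosed : IsClosed (A : Set C(X, ℂ)))
    (hsep : ∀ x y : X, x ≠ y → ∃ f ∈ A, f x ≠ f y)
    (F : Set C(X, ℂ)) (hFA : F ⊆ (A : Set C(X, ℂ)))
    (hFdense : (A : Set C(X, ℂ)) ⊆ closure F)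
    (hsq : ∀ f ∈ F, ∃ h ∈ A, h * h = f)
    (hspan : Dense ((Submodule.span ℝ (logAbsInvSet A) : Submodule ℝ C(X, ℝ)) : Set C(X, ℝ))) :
    Dense (logAbsInvSet A) := by
  set S := logAbsInvSet A with hSdef
  have habs_mul : ∀ (f g : C(X,ℂ)), f * g = 1 → ∀ x,
      ‖f x‖ * ‖g x‖ = 1 := by
    intro f g hfg x
    have h1 : f x * g x = 1 := by
      have h2 := congrArg (fun p : C(X,ℂ) => p x) hfg
      simpa using h2
    rw [← norm_mul, h1, norm_one]
  have hzero : (0 : C(X,ℝ)) ∈ S := ⟨1, one_mem A, ⟨1, one_mem A, one_mul 1⟩, fun x => by simp⟩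
  have hadd : ∀ u ∈ S, ∀ v ∈ S, u + v ∈ S := by
    rintro u ⟨f1, hf1, ⟨g1, hg1, h1⟩, hu⟩ v ⟨f2, hf2, ⟨g2, hg2, h2⟩, hv⟩
    refine ⟨f1 * f2, mul_mem hf1 hf2, ⟨g1 * g2, mul_mem hg1 hg2, by
      rw [mul_mul_mul_comm, h1, h2, one_mul]⟩, fun x => ?_⟩
    have e1 := habs_mul f1 g1 h1 x
    have e2 := habs_mul f2 g2 h2 x
    have hne1 : ‖f1 x‖ ≠ 0 := by
      intro h; rw [h, zero_mul] at e1; exact zero_ne_one e1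
    have hne2 : ‖f2 x‖ ≠ 0 := by
      intro h; rw [h, zero_mul] at e2; exact zero_ne_one e2
    simp [hu x, hv x, Real.log_mul hne1 hne2]
  have hneg : ∀ u ∈ S, -u ∈ S := by
    rintro u ⟨f, hf, ⟨g, hg, hfg⟩, hu⟩
    refine ⟨g, hg, ⟨f, hf, by rw [mul_comm]; exact hfg⟩, fun x => ?_⟩
    have e := habs_mul f g hfg x
    have hginv : ‖g x‖ = (‖f x‖)⁻¹ :=
      eq_inv_of_mul_eq_one_left (by rw [mul_comm]; exact e)
    simp [hu x, hginv, Real.log_inv]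
  -- The key halving step
  have hhalf : ∀ u ∈ S, (2⁻¹ : ℝ) • u ∈ closure S := by
    rintro u ⟨f, hf, ⟨g, hg, hfg⟩, hu⟩
    rcases isEmpty_or_nonempty X with hX | hX
    · have huz : (2⁻¹ : ℝ) • u = 0 := by ext x; exact (hX.false x).elim
      rw [huz]; exact subset_closure hzero
    rw [Metric.mem_closure_iff]
    intro ε hε
    obtain ⟨x₀⟩ := hX
    have hgnorm : 0 < ‖g‖ := by
      have e := habs_mul f g hfg x₀
      have hne : ‖g x₀‖ ≠ 0 := by
        intro h; rw [h, mul_zero] at e; exact zero_ne_one e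
      have h1 : 0 < ‖g x₀‖ :=
        lt_of_le_of_ne (norm_nonneg _) (Ne.symm hne)
      calc (0:ℝ) < ‖g x₀‖ := h1
        _ = ‖g x₀‖ := rfl
        _ ≤ ‖g‖ := ContinuousMap.norm_coe_le_norm g x₀
    set δ := ‖g‖⁻¹ with hδdef
    have hδ : 0 < δ := inv_pos.mpr hgnorm
    have hflb : ∀ x, δ ≤ ‖f x‖ := by
      intro x
      have e := habs_mul f g hfg x
      have hgle : ‖g x‖ ≤ ‖g‖ := ContinuousMap.norm_coe_le_norm g x
      have ha : 0 ≤ ‖f x‖ := norm_nonneg _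
      have h1 : 1 ≤ ‖f x‖ * ‖g‖ := by nlinarith
      have h2 : 1/‖g‖ ≤ ‖f x‖ := (div_le_iff₀ hgnorm).mpr h1
      simpa [hδdef, one_div] using h2
    set ε' := min (δ/2) (ε*δ) with hε'def
    have hε'pos : 0 < ε' := lt_min (by linarith) (mul_pos hε hδ)
    have hε'le : ε' ≤ δ/2 := min_le_left _ _
    obtain ⟨f', hf'F, hdist⟩ := Metric.mem_closure_iff.mp (hFdense hf) ε' hε'pos
    have hf'A : f' ∈ A := hFA hf'F
    set e := f' - f with hedef
    have hnorme : ‖e‖ < ε' := by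
      rw [hedef, ← dist_eq_norm, dist_comm]; exact hdist
    set t := -(g * e) with htdef
    have ht : ‖t‖ < 1 := by
      rw [htdef, norm_neg]
      have h1 : ‖g * e‖ ≤ ‖g‖ * ‖e‖ := norm_mul_le g e
      have h2 : ‖g‖ * δ = 1 := mul_inv_cancel₀ (ne_of_gt hgnorm)
      nlinarith [norm_nonneg e, mul_lt_mul_of_pos_left (lt_of_lt_of_le hnorme hε'le) hgnorm]
    have hsummable : Summable fun n : ℕ => t ^ n := summable_geometric_of_norm_lt_one ht
    set w := ∑' n : ℕ, t ^ n with hwdef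
    have htA : t ∈ A := neg_mem (mul_mem hg (sub_mem hf'A hf))
    have hwA : w ∈ A := by
      have hten : Filter.Tendsto (fun n => ∑ i ∈ Finset.range n, t ^ i)
          Filter.atTop (nhds w) := hsummable.hasSum.tendsto_sum_nat
      exact hclosed.mem_of_tendsto hten
        (Filter.Eventually.of_forall fun n => sum_mem fun i _ => pow_mem htA i)
    have hgeo : (1 - t) * w = 1 := mul_neg_geom_series t ht
    set k := g * w with hkdef
    have hkA : k ∈ A := mul_mem hg hwA
    have hf'fact : f' = f * (1 - t) := by
      have h1 : f * (1 - t) = f + (f * g) * e := by rw [htdef]; ring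
      rw [h1, hfg, one_mul, hedef]; ring
    have hf'k : f' * k = 1 := by
      rw [hf'fact, hkdef]
      calc f * (1 - t) * (g * w) = (f * g) * ((1 - t) * w) := by ring
        _ = 1 := by rw [hfg, hgeo, one_mul]
    obtain ⟨h, hhA, hh2⟩ := hsq f' hf'F
    have habd : ∀ x, |‖f x‖ - ‖f' x‖| ≤ ‖e‖ := by
      intro x
      have h1 : |‖f x‖ - ‖f' x‖| ≤ ‖f x - f' x‖ := abs_norm_sub_norm_le (f x) (f' x)
      have h2 : ‖f x - f' x‖ ≤ ‖f - f'‖ := by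
        have := ContinuousMap.norm_coe_le_norm (f - f') x
        simpa using this
      have h3 : ‖f - f'‖ = ‖e‖ := by rw [hedef, norm_sub_rev]
      calc |‖f x‖ - ‖f' x‖| = |‖f x‖ - ‖f' x‖| := rfl
        _ ≤ ‖f x - f' x‖ := h1
        _ ≤ ‖f - f'‖ := h2
        _ = ‖e‖ := h3
    have hf'lb : ∀ x, δ/2 ≤ ‖f' x‖ := by
      intro x
      have h1 := habd x
      have h4 := hflb x
      rw [abs_le] at h1
      linarith [hnorme]
    have hf'pos : ∀ x, 0 < ‖f' x‖ := fun x =>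
      lt_of_lt_of_le (by linarith) (hf'lb x)
    have hhabs : ∀ x, ‖h x‖ ^ 2 = ‖f' x‖ := by
      intro x
      have h1 : (h x) * (h x) = f' x := by rw [← ContinuousMap.mul_apply, hh2]
      calc ‖h x‖ ^ 2 = ‖h x * h x‖ := by rw [norm_mul]; ring
        _ = ‖f' x‖ := by rw [h1]
    have hhpos : ∀ x, 0 < ‖h x‖ := by
      intro x
      nlinarith [norm_nonneg (h x), hhabs x, hf'pos x]
    set v : C(X, ℝ) := ⟨fun x => Real.log (‖h x‖), by
      apply Real.continuousOn_log.comp_continuous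
        (continuous_norm.comp h.continuous)
      exact fun x => ne_of_gt (hhpos x)⟩ with hvdef
    refine ⟨v, ⟨h, hhA, ⟨h * k, mul_mem hhA hkA, ?_⟩, fun x => rfl⟩, ?_⟩
    · calc h * (h * k) = (h * h) * k := by ring
        _ = 1 := by rw [hh2, hf'k]
    · rw [ContinuousMap.dist_lt_iff hε]
      intro x
      have hux : ((2⁻¹:ℝ) • u) x = 2⁻¹ * Real.log (‖f x‖) := by
        simp [hu x]
      have hvx : v x = 2⁻¹ * Real.log (‖f' x‖) := by
        have h1 : Real.log (‖f' x‖) = 2 * Real.log (‖h x‖) := by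
          rw [← hhabs x, Real.log_pow]; push_cast; ring
        show Real.log (‖h x‖) = _
        rw [h1]; ring
      rw [Real.dist_eq, hux, hvx]
      have hld := log_diff_le_aux (lt_of_lt_of_le hδ (hflb x)) (hf'pos x)
      have hmin : δ/2 ≤ min (‖f x‖) (‖f' x‖) :=
        le_min (by linarith [hflb x]) (hf'lb x)
      have h2 : |Real.log (‖f x‖) - Real.log (‖f' x‖)|
          ≤ ‖e‖ / (δ/2) :=
        le_trans hld (div_le_div₀ (norm_nonneg e) (habd x) (by linarith) hmin)
      have h3 : ‖e‖ / δ < ε := by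
        have h4 : ε' ≤ ε * δ := min_le_right _ _
        rw [div_lt_iff₀ hδ]
        calc ‖e‖ < ε' := hnorme
          _ ≤ ε * δ := h4
      have h1 : |2⁻¹ * Real.log (‖f x‖) - 2⁻¹ * Real.log (‖f' x‖)|
          = 2⁻¹ * |Real.log (‖f x‖) - Real.log (‖f' x‖)| := by
        rw [← mul_sub, abs_mul]; norm_num
      rw [h1]
      calc 2⁻¹ * |Real.log (‖f x‖) - Real.log (‖f' x‖)|
          ≤ 2⁻¹ * (‖e‖ / (δ/2)) := by linarith
        _ = ‖e‖ / δ := by field_simp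
        _ < ε := h3
  -- closure of S is a submodule
  let G : AddSubgroup C(X,ℝ) :=
    { carrier := S
      add_mem' := fun hu hv => hadd _ hu _ hv
      zero_mem' := hzero
      neg_mem' := fun hu => hneg _ hu }
  have hGadd : ∀ u v : C(X,ℝ), u ∈ closure S → v ∈ closure S → u + v ∈ closure S :=
    fun u v hu hv => G.topologicalClosure.add_mem hu hv
  have hhalfc : ∀ u ∈ closure S, (2⁻¹ : ℝ) • u ∈ closure S := by
    intro u hu
    have hc : Continuous fun w : C(X,ℝ) => (2⁻¹:ℝ) • w := continuous_const_smul _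
    have h1 : (2⁻¹:ℝ) • u ∈ closure ((fun w : C(X,ℝ) => (2⁻¹:ℝ) • w) '' S) :=
      image_closure_subset_closure_image hc (Set.mem_image_of_mem _ hu)
    refine closure_minimal ?_ isClosed_closure h1
    rintro _ ⟨w, hw, rfl⟩
    exact hhalf w hw
  have hsmul : ∀ (c : ℝ) (u : C(X,ℝ)), u ∈ closure S → c • u ∈ closure S := by
    intro c u hu
    have hpow : ∀ (j : ℕ), ((2:ℝ)^j)⁻¹ • u ∈ closure S := by
      intro j
      induction j with
      | zero => simpa using hu
      | succ j ih =>
        have h1 := hhalfc _ ih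
        have h2 : (2⁻¹:ℝ) • (((2:ℝ)^j)⁻¹ • u) = ((2:ℝ)^(j+1))⁻¹ • u := by
          rw [smul_smul, pow_succ, mul_inv]
          ring_nf
        rwa [h2] at h1
    have hdyadic : ∀ (n : ℤ) (j : ℕ), ((n:ℝ)/2^j) • u ∈ closure S := by
      intro n j
      have h1 := G.topologicalClosure.zsmul_mem (hpow j) n
      have h2 : (n : ℤ) • (((2:ℝ)^j)⁻¹ • u) = ((n:ℝ)/2^j) • u := by
        rw [← Int.cast_smul_eq_zsmul ℝ, smul_smul, div_eq_mul_inv]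
      rwa [h2] at h1
    have hC : IsClosed {c : ℝ | c • u ∈ closure S} :=
      isClosed_closure.preimage (continuous_id.smul continuous_const)
    have hsub : {x : ℝ | ∃ (n : ℤ) (k : ℕ), x = n / 2 ^ k} ⊆ {c : ℝ | c • u ∈ closure S} := by
      rintro _ ⟨n, j, rfl⟩
      exact hdyadic n j
    exact (hC.closure_subset_iff.mpr hsub) (dyadic_dense_aux c)
  let P : Submodule ℝ C(X,ℝ) :=
    { carrier := closure S
      add_mem' := fun hu hv => hGadd _ _ hu hv
      zero_mem' := subset_closure hzero
      smul_mem' := fun c u hu => hsmul c u hu }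
  have hspanle : (Submodule.span ℝ S : Set C(X,ℝ)) ⊆ closure S :=
    Submodule.span_le (p := P).mpr subset_closure
  have hfinal : closure ((Submodule.span ℝ S : Submodule ℝ C(X,ℝ)) : Set C(X,ℝ)) ⊆ closure S := by
    rw [← closure_closure (s := S)]
    exact closure_mono hspanle
  exact fun w => hfinal (hspan w)
end

section
/- Let A be a uniform algebra on a compact Hausdorff space X, let K be a compact subset of X, and let x ∈ K. If A is strongly regular at x, then the uniform closure of the restriction algebra A|K is strongly regular at x. -/
open Set

variable {Y : Type*} [TopologicalSpace Y]

/-- The ideal `M_y(B)` of functions in `B` vanishing at `y`, for a set `B` of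
continuous functions. -/
def Mideal (B : Set C(Y, ℂ)) (y : Y) : Set C(Y, ℂ)  :=
  {f ∈ B | f y = 0}

/-- The ideal `J_y(B)` of functions in `B` vanishing on a neighborhood of `y`. -/
def Jideal (B : Set C(Y, ℂ)) (y : Y) : Set C(Y, ℂ) :=
  {f ∈ B | ∃ U ∈ nhds y, ∀ z ∈ U, f z = 0}

/-- `B` is strongly regular at `y` if the closure of `J_y(B)` is `M_y(B)`. -/
def StronglyRegularAt (B : Set C(Y, ℂ)) (y : Y) : Prop :=
  closure (Jideal B y) = Mideal B y

/-- If a uniform algebra `A` on a compact Hausdorff space `X` is strongly regular at a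
point `x` of a compact subset `K`, then the uniform closure of `A|K` is strongly
regular at `x`. -/
theorem stmt4 {X : Type*} [TopologicalSpace X] [CompactSpace X] [T2Space X]
    (A : Subalgebra ℂ C(X, ℂ))
    (hclosed : IsClosed (A : Set C(X, ℂ)))
    (hsep : ∀ x y : X, x ≠ y → ∃ f ∈ A, f x ≠ f y)
    (K : Set X) (hK : IsCompact K) (x : X) (hx : x ∈ K)
    (hsr : StronglyRegularAt (A : Set C(X, ℂ)) x) :
    StronglyRegularAt (closure ((fun f : C(X, ℂ) => f.restrict K) '' A)) (⟨x, hx⟩ : K) := by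
  haveI : CompactSpace K := isCompact_iff_compactSpace.mp hK
  set B : Set C(K, ℂ) := closure ((fun f : C(X, ℂ) => f.restrict K) '' A) with hB
  set y : K := (⟨x, hx⟩ : K)
  apply Set.Subset.antisymm
  · -- closure J ⊆ M, since J ⊆ M and M is closed
    have hMclosed : IsClosed (Mideal B y) := by
      have : Mideal B y = B ∩ ((fun f : C(K, ℂ) => f y) ⁻¹' {0}) := by
        ext f; simp [Mideal]
      rw [this]
      exact isClosed_closure.inter
        (IsClosed.preimage (continuous_eval_const y) isClosed_singleton)
    refine closure_minimal ?_ hMclosed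
    rintro f ⟨hfB, U, hU, hvan⟩
    exact ⟨hfB, hvan y (mem_of_mem_nhds hU)⟩
  · -- M ⊆ closure J
    rintro f ⟨hfB, hfy⟩
    rw [Metric.mem_closure_iff]
    intro ε hε
    -- find g ∈ A with restrict close to f
    obtain ⟨g₀, hg₀mem, hg₀d⟩ := Metric.mem_closure_iff.mp hfB (ε / 3) (by linarith)
    obtain ⟨g, hgA, hgr⟩ := hg₀mem
    have hgr' : g.restrict K = g₀ := hgr
    have hdg : dist f (g.restrict K) < ε / 3 := by rwa [hgr']
    have hgx : ‖g x‖ < ε / 3 := by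
      have h0 := ContinuousMap.dist_apply_le_dist (f := f) (g := g.restrict K) y
      rw [hfy] at h0
      calc ‖g x‖ = dist (0 : ℂ) ((g.restrict K) y) := by
            simp [Complex.dist_eq, ContinuousMap.restrict_apply]; rfl
        _ ≤ dist f (g.restrict K) := h0
        _ < ε / 3 := hdg
    -- g' := g - const (g x) is in M_x(A)
    set g' : C(X, ℂ) := g - algebraMap ℂ C(X, ℂ) (g x) with hg'
    have hg'A : g' ∈ (A : Set C(X, ℂ)) :=
      sub_mem hgA (A.algebraMap_mem (g x))
    have hg'x : g' x = 0 := by simp [hg']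
    have hg'M : g' ∈ Mideal (A : Set C(X, ℂ)) x := ⟨hg'A, hg'x⟩
    rw [← hsr] at hg'M
    obtain ⟨h, hhJ, hdh⟩ := Metric.mem_closure_iff.mp hg'M (ε / 3) (by linarith)
    obtain ⟨hhA, U, hU, hUvan⟩ := hhJ
    refine ⟨h.restrict K, ⟨?_, ?_⟩, ?_⟩
    · exact subset_closure ⟨h, hhA, rfl⟩
    · refine ⟨Subtype.val ⁻¹' U, ?_, ?_⟩
      · exact (continuous_subtype_val.continuousAt (x := y)).preimage_mem_nhds hU
      · intro z hz
        simpa [ContinuousMap.restrict_apply] using hUvan z.val hz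
    · -- distance estimate
      have h1 : dist (g'.restrict K) (h.restrict K) ≤ dist g' h := by
        rw [ContinuousMap.dist_le dist_nonneg]
        intro z
        simpa [ContinuousMap.restrict_apply] using
          ContinuousMap.dist_apply_le_dist (f := g') (g := h) z.val
      have h2 : dist (g.restrict K) (g'.restrict K) ≤ ‖g x‖ := by
        rw [ContinuousMap.dist_le (norm_nonneg _)]
        intro z
        simp [hg', Complex.dist_eq, ContinuousMap.restrict_apply]
      calc dist f (h.restrict K)
          ≤ dist f (g.restrict K) + dist (g.restrict K) (g'.restrict K)
            + dist (g'.restrict K) (h.restrict K) := dist_triangle4 _ _ _ _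
        _ ≤ dist f (g.restrict K) + ‖g x‖ + dist g' h := by
            gcongr
        _ < ε / 3 + ε / 3 + ε / 3 := by gcongr
        _ = ε := by ring
end

section
/- Let A be a uniform algebra on a compact Hausdorff space X such that the set of squares {a^2 : a ∈ A} is dense in A. Then every bounded point derivation on A at any point of X is zero. -/
set_option maxHeartbeats 1000000
set_option synthInstance.maxHeartbeats 400000


/-- On a uniform algebra with dense squares, every bounded point derivation is zero. -/
theorem stmt7 {X : Type*} [TopologicalSpace X] [CompactSpace X] [T2Space X]
    (A : Subalgebra ℂ C(X, ℂ))
    (hclosed : IsClosed (A : Set C(X, ℂ)))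
    (hsep : ∀ x y : X, x ≠ y → ∃ f ∈ A, f x ≠ f y)
    (hsquares : (A : Set C(X, ℂ)) ⊆ closure {g : C(X, ℂ) | ∃ a ∈ A, a * a = g})
    (x : X) (D : A →L[ℂ] ℂ)
    (hD : ∀ f g : A, D (f * g) = (f : C(X, ℂ)) x * D g + (g : C(X, ℂ)) x * D f) :
    D = 0 := by
  classical
  -- D 1 = 0
  have hD1 : D 1 = 0 := by
    have := hD 1 1
    simp only [one_mul, OneMemClass.coe_one, ContinuousMap.one_apply] at this
    linear_combination -this
  -- key: D kills elements vanishing at x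
  have key : ∀ g : A, (g : C(X, ℂ)) x = 0 → D g = 0 := by
    intro g hgx
    have hbound : ∀ ε : ℝ, 0 < ε →
        ‖D g‖ ≤ ‖D‖ * ε + 2 * Real.sqrt ε * ‖D‖ * Real.sqrt (‖g‖ + ε) := by
      intro ε hε
      obtain ⟨p, hp, hdist⟩ := Metric.mem_closure_iff.mp (hsquares g.2) ε hε
      obtain ⟨a, haA, rfl⟩ := hp
      set a' : A := ⟨a, haA⟩ with ha'
      have hcoe : ((a' * a' : A) : C(X, ℂ)) = a * a := by push_cast; ring
      have hdist' : ‖(g : C(X, ℂ)) - a * a‖ < ε := by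
        rwa [dist_eq_norm] at hdist
      have hdist'' : ‖(a * a : C(X, ℂ)) - g‖ ≤ ε := by
        rw [← norm_neg]; simpa using hdist'.le
      -- ‖a x‖ ≤ √ε
      have hax : ‖a x‖ ≤ Real.sqrt ε := by
        have h1 : ‖a x‖ * ‖a x‖ ≤ ε :=
          calc ‖a x‖ * ‖a x‖ = ‖(a * a) x‖ := by simp [norm_mul]
            _ = ‖((a * a : C(X, ℂ)) - g) x‖ := by simp [hgx]
            _ ≤ ‖(a * a : C(X, ℂ)) - g‖ := ContinuousMap.norm_coe_le_norm _ _
            _ ≤ ε := hdist''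
        nlinarith [Real.sq_sqrt hε.le, Real.sqrt_nonneg ε, norm_nonneg (a x)]
      -- ‖a‖ ≤ √(‖g‖ + ε)
      have haa : ‖(a * a : C(X, ℂ))‖ ≤ ‖g‖ + ε := by
        calc ‖(a * a : C(X, ℂ))‖ = ‖((a * a : C(X, ℂ)) - g) + g‖ := by
              rw [sub_add_cancel]
          _ ≤ ‖(a * a : C(X, ℂ)) - g‖ + ‖(g : C(X, ℂ))‖ := norm_add_le _ _
          _ ≤ ε + ‖g‖ := add_le_add hdist'' le_rfl
          _ = ‖g‖ + ε := by ring
      have hga : (0:ℝ) ≤ ‖g‖ + ε := by positivity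
      have hna : ‖a‖ ≤ Real.sqrt (‖g‖ + ε) := by
        apply (ContinuousMap.norm_le _ (Real.sqrt_nonneg _)).mpr
        intro t
        have h1 : ‖a t‖ * ‖a t‖ ≤ ‖g‖ + ε :=
          calc ‖a t‖ * ‖a t‖ = ‖(a * a) t‖ := by simp [norm_mul]
            _ ≤ ‖(a * a : C(X, ℂ))‖ := ContinuousMap.norm_coe_le_norm _ _
            _ ≤ ‖g‖ + ε := haa
        nlinarith [Real.sq_sqrt hga, Real.sqrt_nonneg (‖g‖ + ε), norm_nonneg (a t)]
      -- estimate
      have hsplit : g = (g - a' * a') + a' * a' := (sub_add_cancel g (a' * a')).symm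
      have h2 : ‖D (g - a' * a')‖ ≤ ‖D‖ * ε := by
        calc ‖D (g - a' * a')‖ ≤ ‖D‖ * ‖g - a' * a'‖ := D.le_opNorm _
          _ ≤ ‖D‖ * ε := by
              apply mul_le_mul_of_nonneg_left _ (norm_nonneg D)
              have hc : ((g - a' * a' : A) : C(X, ℂ)) = (g : C(X, ℂ)) - a * a := by
                push_cast; ring
              have : ‖g - a' * a'‖ = ‖(g : C(X, ℂ)) - a * a‖ := by
                rw [show ‖(g - a' * a' : A)‖ = ‖((g - a' * a' : A) : C(X, ℂ))‖ from rfl, hc]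
              rw [this]; exact hdist'.le
      have h3 : ‖D (a' * a')‖ ≤ 2 * Real.sqrt ε * ‖D‖ * Real.sqrt (‖g‖ + ε) := by
        have heq := hD a' a'
        have hax' : ((a' : C(X, ℂ))) x = a x := rfl
        rw [heq, hax']
        have hna' : ‖a'‖ = ‖a‖ := rfl
        calc ‖a x * D a' + a x * D a'‖ ≤ ‖a x * D a'‖ + ‖a x * D a'‖ := norm_add_le _ _
          _ = 2 * (‖a x‖ * ‖D a'‖) := by rw [norm_mul]; ring
          _ ≤ 2 * (Real.sqrt ε * (‖D‖ * Real.sqrt (‖g‖ + ε))) := by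
              apply mul_le_mul_of_nonneg_left _ (by norm_num)
              apply mul_le_mul hax _ (norm_nonneg _) (Real.sqrt_nonneg _)
              calc ‖D a'‖ ≤ ‖D‖ * ‖a'‖ := D.le_opNorm _
                _ ≤ ‖D‖ * Real.sqrt (‖g‖ + ε) := by
                    apply mul_le_mul_of_nonneg_left _ (norm_nonneg D)
                    rw [hna']; exact hna
          _ = 2 * Real.sqrt ε * ‖D‖ * Real.sqrt (‖g‖ + ε) := by ring
      calc ‖D g‖ = ‖D (g - a' * a') + D (a' * a')‖ := by
            rw [← map_add]; exact congrArg (fun z => ‖D z‖) hsplit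
        _ ≤ ‖D (g - a' * a')‖ + ‖D (a' * a')‖ := norm_add_le _ _
        _ ≤ ‖D‖ * ε + 2 * Real.sqrt ε * ‖D‖ * Real.sqrt (‖g‖ + ε) := add_le_add h2 h3
    -- take ε → 0
    have hlim : Filter.Tendsto
        (fun ε : ℝ => ‖D‖ * ε + 2 * Real.sqrt ε * ‖D‖ * Real.sqrt (‖g‖ + ε))
        (nhdsWithin 0 (Set.Ioi 0)) (nhds 0) := by
      have hc : Continuous
          (fun ε : ℝ => ‖D‖ * ε + 2 * Real.sqrt ε * ‖D‖ * Real.sqrt (‖g‖ + ε)) := by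
        fun_prop
      have := hc.tendsto 0
      simp only [Real.sqrt_zero, mul_zero, zero_mul, add_zero, zero_add] at this
      exact this.mono_left nhdsWithin_le_nhds
    have hle : ‖D g‖ ≤ 0 :=
      ge_of_tendsto hlim (Filter.eventually_of_mem self_mem_nhdsWithin
        (fun ε hε => hbound ε hε))
    exact norm_eq_zero.mp (le_antisymm hle (norm_nonneg _))
  -- conclude
  ext f
  have hg : ((f - ((f : C(X, ℂ)) x) • (1 : A) : A) : C(X, ℂ)) x = 0 := by
    push_cast
    simp
  have hzero := key _ hg
  rw [map_sub, map_smul, hD1] at hzero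
  simpa using hzero
end

section
/- Let X be a compact metric space and let {K_n} be a sequence of pairwise disjoint compact subsets of X with diam(K_n) → 0. Then the set G = {f ∈ C_R(X) : f restricted to K_n is constant for all but finitely many n} is dense in C_R(X). -/
open Filter Metric

section Aux
lemma sat_closed12 {X : Type*} [MetricSpace X] (K : ℕ → Set X) (hcpt : ∀ n, IsCompact (K n))
    (hdiam : Tendsto (fun n => Metric.diam (K n)) atTop (nhds 0)) (N : ℕ)
    {C : Set X} (hC : IsClosed C) (hsat : ∀ n, N ≤ n → (K n ∩ C).Nonempty → K n ⊆ C → True) :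
    IsClosed (C ∪ ⋃ n ∈ {n | N ≤ n ∧ (K n ∩ C).Nonempty}, K n) := by
  rcases C.eq_empty_or_nonempty with hCe | hCne
  · subst hCe
    simp
  rw [← isOpen_compl_iff]
  rw [Metric.isOpen_iff]
  intro z hz
  simp only [Set.mem_compl_iff, Set.mem_union, Set.mem_iUnion, Set.mem_setOf_eq, not_or,
    not_exists] at hz
  obtain ⟨hzC, hzK⟩ := hz
  have hd : 0 < infDist z C := (hC.notMem_iff_infDist_pos hCne).mp hzC
  set d := infDist z C with hdd
  obtain ⟨M, hM⟩ : ∃ M, ∀ n, M ≤ n → diam (K n) < d / 3 := by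
    have := (hdiam.eventually (gt_mem_nhds (by linarith : (0:ℝ) < d / 3)))
    exact this.exists_forall_of_atTop
  classical
  set J : Finset ℕ := (Finset.range M).filter (fun n => N ≤ n ∧ (K n ∩ C).Nonempty) with hJ
  set r : ℝ := (insert (d/3) (J.image fun n => infDist z (K n))).min' (Finset.insert_nonempty _ _)
    with hr
  have hKpos : ∀ n ∈ J, 0 < infDist z (K n) := by
    intro n hn
    simp only [hJ, Finset.mem_filter, Finset.mem_range] at hn
    have hnM := hn.1; have hnN := hn.2.1; have hne := hn.2.2
    refine (((hcpt n).isClosed).notMem_iff_infDist_pos ⟨hne.some, hne.some_mem.1⟩).mp ?_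
    intro hzn
    exact hzK n ⟨hnN, hne⟩ hzn
  have hrpos : 0 < r := by
    have := Finset.min'_mem (insert (d/3) (J.image fun n => infDist z (K n)))
      (Finset.insert_nonempty _ _)
    rw [← hr] at this
    rcases Finset.mem_insert.mp this with h | h
    · rw [h]; linarith
    · obtain ⟨n, hn, hv⟩ := Finset.mem_image.mp h
      rw [← hv]; exact hKpos n hn
  have hrd3 : r ≤ d / 3 := Finset.min'_le _ _ (Finset.mem_insert_self _ _)
  refine ⟨r, hrpos, ?_⟩
  intro w hw
  simp only [Set.mem_compl_iff, Set.mem_union, Set.mem_iUnion, Set.mem_setOf_eq, not_or,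
    not_exists]
  rw [mem_ball, dist_comm] at hw
  constructor
  · intro hwC
    have : d ≤ dist z w := infDist_le_dist_of_mem hwC
    linarith
  · intro n hn hwK
    obtain ⟨hnN, hne⟩ := hn
    rcases lt_or_ge n M with hnM | hnM
    · have hnJ : n ∈ J := by
        simp only [hJ, Finset.mem_filter, Finset.mem_range]
        exact ⟨hnM, hnN, hne⟩
      have h1 : r ≤ infDist z (K n) :=
        Finset.min'_le _ _ (Finset.mem_insert_of_mem (Finset.mem_image_of_mem _ hnJ))
      have h2 : infDist z (K n) ≤ dist z w := infDist_le_dist_of_mem hwK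
      linarith
    · obtain ⟨c, hcK, hcC⟩ := hne
      have h1 : dist w c ≤ diam (K n) := dist_le_diam_of_mem (hcpt n).isBounded hwK hcK
      have h2 : diam (K n) < d / 3 := hM n hnM
      have h3 : d ≤ dist z c := infDist_le_dist_of_mem hcC
      have h4 : dist z c ≤ dist z w + dist w c := dist_triangle _ _ _
      linarith

end Aux


open Filter

/-- If `{Kₙ}` is a sequence of pairwise disjoint compact subsets of a compact metric
space `X` with `diam Kₙ → 0`, then the real continuous functions that are constant on
all but finitely many of the `Kₙ` are dense in `C_ℝ(X)`. -/
theorem stmt12 {X : Type*} [MetricSpace X] [CompactSpace X]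
    (K : ℕ → Set X) (hcpt : ∀ n, IsCompact (K n))
    (hdisj : Pairwise fun m n => Disjoint (K m) (K n))
    (hdiam : Tendsto (fun n => Metric.diam (K n)) atTop (nhds 0)) :
    Dense {f : C(X, ℝ) |
      {n : ℕ | ¬ ∀ x ∈ K n, ∀ y ∈ K n, f x = f y}.Finite} := by
  classical
  set G : Set C(X, ℝ) :=
    {f : C(X, ℝ) | {n : ℕ | ¬ ∀ x ∈ K n, ∀ y ∈ K n, f x = f y}.Finite} with hG
  let A : Subalgebra ℝ C(X, ℝ) :=
  { carrier := G
    mul_mem' := by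
      intro f g hf hg
      refine (hf.union hg).subset ?_
      intro n hn
      by_contra hmem
      simp only [Set.mem_union, Set.mem_setOf_eq, not_or, not_not] at hmem
      exact hn fun x hx y hy => by
        simp only [ContinuousMap.mul_apply, hmem.1 x hx y hy, hmem.2 x hx y hy]
    one_mem' := by
      refine Set.Finite.subset Set.finite_empty ?_
      intro n hn
      exact absurd (fun x _ y _ => rfl) hn
    add_mem' := by
      intro f g hf hg
      refine (hf.union hg).subset ?_
      intro n hn
      by_contra hmem
      simp only [Set.mem_union, Set.mem_setOf_eq, not_or, not_not] at hmem
      exact hn fun x hx y hy => by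
        simp only [ContinuousMap.add_apply, hmem.1 x hx y hy, hmem.2 x hx y hy]
    zero_mem' := by
      refine Set.Finite.subset Set.finite_empty ?_
      intro n hn
      exact absurd (fun x _ y _ => rfl) hn
    algebraMap_mem' := by
      intro r
      refine Set.Finite.subset Set.finite_empty ?_
      intro n hn
      exact absurd (fun x _ y _ => rfl) hn }
  have hsep : A.SeparatesPoints := by
    intro x y hxy
    -- choose N beyond any common K n
    obtain ⟨N, hN⟩ : ∃ N, ∀ n, N ≤ n → ¬(x ∈ K n ∧ y ∈ K n) := by
      by_cases hc : ∃ n, x ∈ K n ∧ y ∈ K n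
      · obtain ⟨m, hm⟩ := hc
        refine ⟨m + 1, fun n hn hmem => ?_⟩
        exact Set.disjoint_left.mp (hdisj (show m ≠ n by omega)) hm.1 hmem.1
      · exact ⟨0, fun n _ h => hc ⟨n, h⟩⟩
    letI s : Setoid X :=
      ⟨fun a b => a = b ∨ ∃ n, N ≤ n ∧ a ∈ K n ∧ b ∈ K n, by
        refine ⟨fun a => Or.inl rfl, ?_, ?_⟩
        · rintro a b (rfl | ⟨n, hn, ha, hb⟩)
          · exact Or.inl rfl
          · exact Or.inr ⟨n, hn, hb, ha⟩
        · rintro a b c (rfl | ⟨n, hn, ha, hb⟩) h2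
          · exact h2
          · rcases h2 with rfl | ⟨m, hm, hb', hc'⟩
            · exact Or.inr ⟨n, hn, ha, hb⟩
            · have hnm : n = m := by
                by_contra hne
                exact Set.disjoint_left.mp (hdisj hne) hb hb'
              subst hnm
              exact Or.inr ⟨n, hn, ha, hc'⟩⟩
    set q : X → Quotient s := Quotient.mk' with hq
    have hqc : Continuous q := continuous_quotient_mk'
    -- the quotient map is closed
    have hsatur : ∀ C : Set X, q ⁻¹' (q '' C) =
        C ∪ ⋃ n ∈ {n | N ≤ n ∧ (K n ∩ C).Nonempty}, K n := by
      intro C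
      ext z
      simp only [Set.mem_preimage, Set.mem_image, Set.mem_union, Set.mem_iUnion,
        Set.mem_setOf_eq]
      constructor
      · rintro ⟨c, hcC, hqc'⟩
        have hrel : s.r z c := Quotient.eq''.mp hqc'.symm
        rcases hrel with rfl | ⟨n, hn, hz, hc⟩
        · exact Or.inl hcC
        · exact Or.inr ⟨n, ⟨hn, ⟨c, hc, hcC⟩⟩, hz⟩
      · rintro (hzC | ⟨n, ⟨hn, c, hcK, hcC⟩, hz⟩)
        · exact ⟨z, hzC, rfl⟩
        · exact ⟨c, hcC, Quotient.sound' (Or.inr ⟨n, hn, hcK, hz⟩)⟩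
    have hclosed : ∀ C : Set X, IsClosed C → IsClosed (q '' C) := by
      intro C hC
      rw [← isQuotientMap_quotient_mk'.isClosed_preimage, hsatur]
      exact sat_closed12 K hcpt hdiam N hC (fun _ _ _ _ => trivial)
    have hsingleton : ∀ a : X, IsClosed ({q a} : Set (Quotient s)) := by
      intro a
      rw [← Set.image_singleton]
      exact hclosed _ isClosed_singleton
    haveI : T2Space (Quotient s) := by
      refine ⟨fun c d hcd => ?_⟩
      obtain ⟨a, rfl⟩ := Quotient.exists_rep c
      obtain ⟨b, rfl⟩ := Quotient.exists_rep d
      have hab : (⟦a⟧ : Quotient s) = q a := rfl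
      have hbb : (⟦b⟧ : Quotient s) = q b := rfl
      have hAB : Disjoint (q ⁻¹' {q a}) (q ⁻¹' {q b}) := by
        rw [Set.disjoint_left]
        intro z hza hzb
        simp only [Set.mem_preimage, Set.mem_singleton_iff] at hza hzb
        exact hcd (by rw [hab, ← hza, hzb]; rfl)
      obtain ⟨U, V, hUo, hVo, hAU, hBV, hUV⟩ :=
        NormalSpace.normal (q ⁻¹' {q a}) (q ⁻¹' {q b})
          (IsClosed.preimage hqc (hsingleton a)) (IsClosed.preimage hqc (hsingleton b)) hAB
      refine ⟨(q '' Uᶜ)ᶜ, (q '' Vᶜ)ᶜ,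
        (hclosed _ hUo.isClosed_compl).isOpen_compl,
        (hclosed _ hVo.isClosed_compl).isOpen_compl, ?_, ?_, ?_⟩
      · rintro ⟨z, hz, hz'⟩
        exact hz (hAU (show q z ∈ {q a} by rw [hz', hab]; exact Set.mem_singleton _))
      · rintro ⟨z, hz, hz'⟩
        exact hz (hBV (show q z ∈ {q b} by rw [hz', hbb]; exact Set.mem_singleton _))
      · rw [Set.disjoint_left]
        intro e heU heV
        obtain ⟨z, rfl⟩ := Quotient.exists_rep e
        have hzU : z ∈ U := by
          by_contra h
          exact heU ⟨z, h, rfl⟩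
        have hzV : z ∈ V := by
          by_contra h
          exact heV ⟨z, h, rfl⟩
        exact Set.disjoint_left.mp hUV hzU hzV
    have hqxy : q x ≠ q y := by
      intro h
      rcases Quotient.eq''.mp h with rfl | ⟨n, hn, hx', hy'⟩
      · exact hxy rfl
      · exact hN n hn ⟨hx', hy'⟩
    obtain ⟨g, hg0, hg1, -⟩ :=
      exists_continuous_zero_one_of_isClosed (hsingleton x) (hsingleton y)
        (Set.disjoint_singleton.mpr hqxy)
    refine ⟨_, ⟨g.comp ⟨q, hqc⟩, ?_, rfl⟩, ?_⟩
    · show _ ∈ G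
      refine Set.Finite.subset (Set.finite_Iio N) ?_
      intro n hn
      by_contra h
      simp only [Set.mem_Iio, not_lt] at h
      refine hn fun x' hx' y' hy' => ?_
      have : q x' = q y' := Quotient.sound' (Or.inr ⟨n, h, hx', hy'⟩)
      simp only [ContinuousMap.comp_apply, ContinuousMap.coe_mk, this]
    · have h0 : g (q x) = 0 := hg0 rfl
      have h1 : g (q y) = 1 := hg1 rfl
      simp only [ContinuousMap.comp_apply, ContinuousMap.coe_mk, h0, h1]
      norm_num
  have htop := ContinuousMap.subalgebra_topologicalClosure_eq_top_of_separatesPoints A hsep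
  have : Dense (A : Set C(X, ℝ)) := by
    rw [dense_iff_closure_eq, ← Subalgebra.topologicalClosure_coe, htop]
    rfl
  exact this
end

section
/- Let X be a compact metric space, {K_n} a sequence of pairwise disjoint compact subsets with diam(K_n) → 0 and union dense in X, and for each n let A_n be a uniform algebra on K_n that is Dirichlet on K_n. Then the algebra à = {f ∈ C(X) : f|K_n ∈ A_n for all n} has the property: if each A_n is Dirichlet on K_n and à is a uniform algebra on X with Ã|K_n = A_n for all n, then à is Dirichlet on X. -/
open Filter Metric Set

set_option linter.unusedSectionVars false
set_option maxHeartbeats 2000000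

section Helpers

variable {X : Type*} [MetricSpace X] [CompactSpace X]

/-- The relation collapsing each `K j`, `j ∈ S`, to a point. -/
def krel (K : ℕ → Set X) (S : Set ℕ) (a b : X) : Prop :=
  a = b ∨ ∃ j ∈ S, a ∈ K j ∧ b ∈ K j

/-- Saturation of a set with respect to `krel`. -/
def ksat (K : ℕ → Set X) (S : Set ℕ) (C : Set X) : Set X :=
  C ∪ ⋃ j ∈ {j | j ∈ S ∧ (K j ∩ C).Nonempty}, K j

/-- A set saturated for `krel`. -/
def KSaturated (K : ℕ → Set X) (S : Set ℕ) (C : Set X) : Prop :=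
  ∀ a b, krel K S a b → a ∈ C → b ∈ C

variable {K : ℕ → Set X} {S : Set ℕ}

lemma kmem_eq (hdisj : Pairwise fun m n => Disjoint (K m) (K n))
    {j j' : ℕ} {b : X} (h : b ∈ K j) (h' : b ∈ K j') : j = j' := by
  by_contra hne
  exact (hdisj hne).le_bot ⟨h, h'⟩ |>.elim

lemma krel_equivalence (hdisj : Pairwise fun m n => Disjoint (K m) (K n)) :
    Equivalence (krel K S) := by
  constructor
  · intro x; exact Or.inl rfl
  · rintro a b (rfl | ⟨j, hj, ha, hb⟩)
    · exact Or.inl rfl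
    · exact Or.inr ⟨j, hj, hb, ha⟩
  · rintro a b c (rfl | ⟨j, hj, ha, hb⟩) h2
    · exact h2
    · rcases h2 with rfl | ⟨j', hj', hb', hc⟩
      · exact Or.inr ⟨j, hj, ha, hb⟩
      · rcases kmem_eq hdisj hb hb' with rfl
        exact Or.inr ⟨j, hj, ha, hc⟩

lemma subset_ksat (C : Set X) : C ⊆ ksat K S C := subset_union_left

lemma ksat_saturated (hdisj : Pairwise fun m n => Disjoint (K m) (K n)) (C : Set X) :
    KSaturated K S (ksat K S C) := by
  rintro a b (rfl | ⟨j, hj, ha, hb⟩) haC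
  · exact haC
  · rcases haC with haC | haC
    · exact Or.inr (mem_biUnion ⟨hj, ⟨a, ha, haC⟩⟩ hb)
    · simp only [mem_iUnion] at haC
      obtain ⟨j', ⟨hj', hne⟩, haj'⟩ := haC
      rcases kmem_eq hdisj ha haj' with rfl
      exact Or.inr (mem_biUnion ⟨hj', hne⟩ hb)

lemma compl_saturated (hdisj : Pairwise fun m n => Disjoint (K m) (K n))
    {C : Set X} (hC : KSaturated K S C) : KSaturated K S Cᶜ := by
  intro a b hab ha hb
  exact ha (hC b a ((krel_equivalence hdisj).symm hab) hb)

lemma mem_ksat_singleton {x z : X} : z ∈ ksat K S {x} ↔ krel K S x z := by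
  constructor
  · rintro (rfl | hz)
    · exact Or.inl rfl
    · simp only [mem_iUnion] at hz
      obtain ⟨j, ⟨hjS, c, hcK, hcx⟩, hzj⟩ := hz
      rcases hcx with rfl
      exact Or.inr ⟨j, hjS, hcK, hzj⟩
  · rintro (rfl | ⟨j, hjS, hxj, hzj⟩)
    · exact Or.inl rfl
    · exact Or.inr (mem_biUnion ⟨hjS, x, hxj, rfl⟩ hzj)

lemma isClosed_ksat (hcpt : ∀ n, IsCompact (K n))
    (hdiam : Tendsto (fun n => Metric.diam (K n)) atTop (nhds 0))
    {C : Set X} (hC : IsClosed C) : IsClosed (ksat K S C) := by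
  apply isClosed_of_closure_subset
  intro x hx
  by_cases hxC : x ∈ C
  · exact Or.inl hxC
  obtain ⟨ε, hε, hball⟩ : ∃ ε > 0, ball x ε ⊆ Cᶜ := by
    rcases Metric.isOpen_iff.1 hC.isOpen_compl x hxC with ⟨ε, hε, h⟩
    exact ⟨ε, hε, h⟩
  obtain ⟨N, hN⟩ : ∃ N, ∀ j ≥ N, diam (K j) < ε / 2 :=
    eventually_atTop.1 (hdiam.eventually_lt_const (half_pos hε))
  set T : Set ℕ := {j | j < N ∧ j ∈ S ∧ (K j ∩ C).Nonempty} with hT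
  have hTfin : T.Finite := (finite_Iio N).subset fun j hj => hj.1
  have hUcl : IsClosed (⋃ j ∈ T, K j) :=
    hTfin.isClosed_biUnion fun j _ => (hcpt j).isClosed
  have hxU : x ∈ ⋃ j ∈ T, K j := by
    rw [← hUcl.closure_eq]
    rw [Metric.mem_closure_iff]
    intro r hr
    have hr' : 0 < min r (ε / 2) := lt_min hr (half_pos hε)
    obtain ⟨y, hy, hxy⟩ := Metric.mem_closure_iff.1 hx _ hr'
    rcases hy with hyC | hy
    · exfalso
      refine hball ?_ hyC
      rw [mem_ball, dist_comm]
      exact hxy.trans_le ((min_le_right _ _).trans (by linarith))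
    · simp only [mem_iUnion] at hy
      obtain ⟨j, ⟨hjS, c, hcK, hcC⟩, hyK⟩ := hy
      rcases lt_or_ge j N with hjN | hjN
      · exact ⟨y, mem_biUnion ⟨hjN, hjS, c, hcK, hcC⟩ hyK, hxy.trans_le (min_le_left _ _)⟩
      · exfalso
        refine hball ?_ hcC
        have h1 : dist y c ≤ diam (K j) := dist_le_diam_of_mem (hcpt j).isBounded hyK hcK
        have h2 : dist x y < ε / 2 := hxy.trans_le (min_le_right _ _)
        have h3 : diam (K j) < ε / 2 := hN j hjN
        rw [mem_ball]
        calc dist c x ≤ dist c y + dist y x := dist_triangle _ _ _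
        _ < ε := by rw [dist_comm c y, dist_comm y x]; linarith
  simp only [mem_iUnion] at hxU
  obtain ⟨j, ⟨_, hjS, hne⟩, hxK⟩ := hxU
  exact Or.inr (mem_biUnion ⟨hjS, hne⟩ hxK)

variable (K S) in
def ksetoid (hdisj : Pairwise fun m n => Disjoint (K m) (K n)) : Setoid X :=
  ⟨krel K S, krel_equivalence hdisj⟩

/-- Urysohn-type lemma producing functions constant on each `K j`, `j ∈ S`. -/
lemma exists_urysohn_saturated (hcpt : ∀ n, IsCompact (K n))
    (hdisj : Pairwise fun m n => Disjoint (K m) (K n))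
    (hdiam : Tendsto (fun n => Metric.diam (K n)) atTop (nhds 0))
    {C₀ C₁ : Set X} (h₀ : IsClosed C₀) (h₁ : IsClosed C₁)
    (hs₀ : KSaturated K S C₀) (hs₁ : KSaturated K S C₁) (hd : Disjoint C₀ C₁) :
    ∃ h : C(X, ℝ), EqOn h 0 C₀ ∧ EqOn h 1 C₁ ∧ (∀ x, h x ∈ Icc (0:ℝ) 1) ∧
      ∀ j ∈ S, ∀ a ∈ K j, ∀ b ∈ K j, h a = h b := by
  classical
  set st := ksetoid K S hdisj with hst
  have hsatiff : ∀ C : Set X, KSaturated K S C →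
      Quotient.mk st ⁻¹' (Quotient.mk st '' C) = C := by
    intro C hC
    ext x
    constructor
    · rintro ⟨c, hcC, hcx⟩
      exact hC c x (Quotient.exact hcx) hcC
    · intro hx; exact ⟨x, hx, rfl⟩
  haveI hT2 : T2Space (Quotient st) := by
    constructor
    intro y₁ y₂ hne
    obtain ⟨a, rfl⟩ := Quotient.exists_rep y₁
    obtain ⟨b, rfl⟩ := Quotient.exists_rep y₂
    have hnrel : ¬ krel K S a b := fun h => hne (Quotient.sound h)
    set Ca : Set X := {x | krel K S a x} with hCa
    set Cb : Set X := {x | krel K S b x} with hCb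
    have hclscl : ∀ c : X, IsClosed {x | krel K S c x} := by
      intro c
      by_cases hc : ∃ j ∈ S, c ∈ K j
      · obtain ⟨j, hjS, hcj⟩ := hc
        have : {x | krel K S c x} = K j := by
          ext x
          constructor
          · rintro (rfl | ⟨j', hj', hcj', hxj'⟩)
            · exact hcj
            · rcases kmem_eq hdisj hcj' hcj with rfl; exact hxj'
          · intro hx; exact Or.inr ⟨j, hjS, hcj, hx⟩
        rw [this]; exact (hcpt j).isClosed
      · have : {x | krel K S c x} = {c} := by
          ext x
          constructor
          · rintro (rfl | ⟨j, hj, hcj, _⟩)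
            · exact rfl
            · exact absurd ⟨j, hj, hcj⟩ hc
          · rintro rfl; exact Or.inl rfl
        rw [this]; exact isClosed_singleton
    have hdab : Disjoint Ca Cb := by
      rw [Set.disjoint_left]
      intro x hax hbx
      exact hnrel ((krel_equivalence hdisj).trans hax ((krel_equivalence hdisj).symm hbx))
    obtain ⟨U, V, hU, hV, hCaU, hCbV, hUV⟩ :=
      NormalSpace.normal Ca Cb (hclscl a) (hclscl b) hdab
    set Wa : Set X := (ksat K S Uᶜ)ᶜ with hWa
    set Wb : Set X := (ksat K S Vᶜ)ᶜ with hWb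
    have hWaO : IsOpen Wa := (isClosed_ksat hcpt hdiam hU.isClosed_compl).isOpen_compl
    have hWbO : IsOpen Wb := (isClosed_ksat hcpt hdiam hV.isClosed_compl).isOpen_compl
    have hWasat : KSaturated K S Wa := compl_saturated hdisj (ksat_saturated hdisj _)
    have hWbsat : KSaturated K S Wb := compl_saturated hdisj (ksat_saturated hdisj _)
    have hWaU : Wa ⊆ U := fun x hx => by
      by_contra hxU; exact hx (subset_ksat _ hxU)
    have hWbV : Wb ⊆ V := fun x hx => by
      by_contra hxV; exact hx (subset_ksat _ hxV)
    have haWa : a ∈ Wa := by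
      intro hmem
      rcases hmem with h | h
      · exact h (hCaU (Or.inl rfl))
      · simp only [mem_iUnion] at h
        obtain ⟨j, ⟨hjS, z, hzK, hzU⟩, haj⟩ := h
        exact hzU (hCaU (Or.inr ⟨j, hjS, haj, hzK⟩))
    have hbWb : b ∈ Wb := by
      intro hmem
      rcases hmem with h | h
      · exact h (hCbV (Or.inl rfl))
      · simp only [mem_iUnion] at h
        obtain ⟨j, ⟨hjS, z, hzK, hzV⟩, hbj⟩ := h
        exact hzV (hCbV (Or.inr ⟨j, hjS, hbj, hzK⟩))
    refine ⟨Quotient.mk st '' Wa, Quotient.mk st '' Wb, ?_, ?_, ⟨a, haWa, rfl⟩,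
      ⟨b, hbWb, rfl⟩, ?_⟩
    · rw [isOpen_coinduced (f := Quotient.mk st), hsatiff _ hWasat]; exact hWaO
    · rw [isOpen_coinduced (f := Quotient.mk st), hsatiff _ hWbsat]; exact hWbO
    · rw [Set.disjoint_left]
      rintro y ⟨w₁, hw₁, rfl⟩ ⟨w₂, hw₂, hw⟩
      have : w₂ ∈ Wa := hWasat w₁ w₂ (Quotient.exact hw.symm) hw₁
      exact (hUV.le_bot ⟨hWaU this, hWbV hw₂⟩)
  have hmkc : Continuous (Quotient.mk st) := continuous_quotient_mk'
  have hQ0 : IsClosed (Quotient.mk st '' C₀) := by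
    rw [← isOpen_compl_iff, isOpen_coinduced (f := Quotient.mk st), preimage_compl,
      hsatiff _ hs₀]
    exact h₀.isOpen_compl
  have hQ1 : IsClosed (Quotient.mk st '' C₁) := by
    rw [← isOpen_compl_iff, isOpen_coinduced (f := Quotient.mk st), preimage_compl,
      hsatiff _ hs₁]
    exact h₁.isOpen_compl
  have hQd : Disjoint (Quotient.mk st '' C₀) (Quotient.mk st '' C₁) := by
    rw [Set.disjoint_left]
    rintro y ⟨w₁, hw₁, rfl⟩ ⟨w₂, hw₂, hw⟩
    have : w₂ ∈ C₀ := hs₀ w₁ w₂ (Quotient.exact hw.symm) hw₁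
    exact hd.le_bot ⟨this, hw₂⟩
  obtain ⟨v, hv0, hv1, hv01⟩ := exists_continuous_zero_one_of_isClosed hQ0 hQ1 hQd
  refine ⟨v.comp ⟨Quotient.mk st, hmkc⟩, ?_, ?_, ?_, ?_⟩
  · intro x hx
    simpa using hv0 ⟨x, hx, rfl⟩
  · intro x hx
    simpa using hv1 ⟨x, hx, rfl⟩
  · intro x; exact hv01 _
  · intro j hj a ha b hb
    simp only [ContinuousMap.comp_apply, ContinuousMap.coe_mk]
    congr 1
    exact Quotient.sound (Or.inr ⟨j, hj, ha, hb⟩)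

variable (K) in
/-- Continuous real functions constant on all but finitely many of the `K j`. -/
def Econst : Subalgebra ℝ C(X, ℝ) where
  carrier := {w | ∃ F : Finset ℕ, ∀ j ∉ F, ∃ c : ℝ, ∀ x ∈ K j, w x = c}
  mul_mem' := by
    rintro w v ⟨F, hF⟩ ⟨G, hG⟩
    refine ⟨F ∪ G, fun j hj => ?_⟩
    obtain ⟨c, hc⟩ := hF j (fun h => hj (Finset.mem_union_left _ h))
    obtain ⟨d, hd⟩ := hG j (fun h => hj (Finset.mem_union_right _ h))
    exact ⟨c * d, fun x hx => by simp [hc x hx, hd x hx]⟩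
  add_mem' := by
    rintro w v ⟨F, hF⟩ ⟨G, hG⟩
    refine ⟨F ∪ G, fun j hj => ?_⟩
    obtain ⟨c, hc⟩ := hF j (fun h => hj (Finset.mem_union_left _ h))
    obtain ⟨d, hd⟩ := hG j (fun h => hj (Finset.mem_union_right _ h))
    exact ⟨c + d, fun x hx => by simp [hc x hx, hd x hx]⟩
  algebraMap_mem' := fun r => ⟨∅, fun j _ => ⟨r, fun x _ => rfl⟩⟩

lemma const_on_of_eq {j : ℕ} {h : C(X, ℝ)} (hconst : ∀ a ∈ K j, ∀ b ∈ K j, h a = h b) :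
    ∃ c : ℝ, ∀ x ∈ K j, h x = c := by
  classical
  by_cases hne : (K j).Nonempty
  · exact ⟨h hne.choose, fun x hx => hconst x hx _ hne.choose_spec⟩
  · exact ⟨0, fun x hx => absurd ⟨x, hx⟩ hne⟩

lemma Econst_dense (hcpt : ∀ n, IsCompact (K n))
    (hdisj : Pairwise fun m n => Disjoint (K m) (K n))
    (hdiam : Tendsto (fun n => Metric.diam (K n)) atTop (nhds 0)) :
    Dense ((Econst K : Subalgebra ℝ C(X, ℝ)) : Set C(X, ℝ)) := by
  classical
  have hsep : (Econst K).SeparatesPoints := by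
    intro x y hxy
    set S : Set ℕ := {j | ¬(x ∈ K j ∧ y ∈ K j)} with hS
    have hd : Disjoint (ksat K S {x}) (ksat K S {y}) := by
      rw [Set.disjoint_left]
      intro z hzx hzy
      have h1 : krel K S x z := mem_ksat_singleton.1 hzx
      have h2 : krel K S y z := mem_ksat_singleton.1 hzy
      have : krel K S x y :=
        (krel_equivalence hdisj).trans h1 ((krel_equivalence hdisj).symm h2)
      rcases this with rfl | ⟨j, hjS, hxj, hyj⟩
      · exact hxy rfl
      · exact hjS ⟨hxj, hyj⟩
    have hsat0 : KSaturated K S (ksat K S {x}) := ksat_saturated hdisj _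
    have hsat1 : KSaturated K S (ksat K S {y}) := ksat_saturated hdisj _
    obtain ⟨h, h0, h1, h01, hconst⟩ :=
      exists_urysohn_saturated hcpt hdisj hdiam
        (isClosed_ksat hcpt hdiam isClosed_singleton)
        (isClosed_ksat hcpt hdiam isClosed_singleton) hsat0 hsat1 hd
    have hmem : h ∈ Econst K := by
      by_cases hex : ∃ j, x ∈ K j ∧ y ∈ K j
      · refine ⟨{hex.choose}, fun j hj => ?_⟩
        by_cases hjS : j ∈ S
        · exact const_on_of_eq (hconst j hjS)
        · exfalso
          have hj' : x ∈ K j ∧ y ∈ K j := not_not.1 hjS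
          have := kmem_eq hdisj hj'.1 hex.choose_spec.1
          exact hj (by simp [this])
      · refine ⟨∅, fun j _ => ?_⟩
        refine const_on_of_eq (hconst j ?_)
        exact fun hc => hex ⟨j, hc⟩
    refine ⟨h, ⟨h, hmem, rfl⟩, ?_⟩
    have hx0 : h x = 0 := h0 (subset_ksat _ rfl)
    have hy1 : h y = 1 := h1 (subset_ksat _ rfl)
    simp [hx0, hy1]
  have htop := ContinuousMap.subalgebra_topologicalClosure_eq_top_of_separatesPoints
    (Econst K) hsep
  rw [dense_iff_closure_eq, ← Subalgebra.topologicalClosure_coe, htop]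
  rfl

end Helpers

/-- A uniform algebra `B` on a compact space `Y` is Dirichlet if the real parts of its
elements are dense in `C_ℝ(Y)`. -/
def IsDirichletSet {Y : Type*} [TopologicalSpace Y] (B : Set C(Y, ℂ)) : Prop :=
  Dense {u : C(Y, ℝ) | ∃ f ∈ B, ∀ y, u y = (f y).re}

/-- Feinstein–Izzo construction: if each `Aₙ` is Dirichlet on `Kₙ` and
`Ã = {f ∈ C(X) : f|Kₙ ∈ Aₙ for all n}` is a uniform algebra on `X` with
`Ã|Kₙ = Aₙ`, then `Ã` is Dirichlet on `X`. -/
theorem stmt13 {X : Type*} [MetricSpace X] [CompactSpace X]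
    (K : ℕ → Set X) (hcpt : ∀ n, IsCompact (K n))
    (hnwd : ∀ n, interior (closure (K n)) = ∅)
    (hdisj : Pairwise fun m n => Disjoint (K m) (K n))
    (hdiam : Tendsto (fun n => Metric.diam (K n)) atTop (nhds 0))
    (hunion : Dense (⋃ n, K n))
    (A : ∀ n : ℕ, Subalgebra ℂ C(K n, ℂ))
    (hAclosed : ∀ n, IsClosed ((A n : Set C(K n, ℂ))))
    (hAsep : ∀ n, ∀ x y : K n, x ≠ y → ∃ f ∈ A n, f x ≠ f y)
    (hADir : ∀ n, IsDirichletSet ((A n : Set C(K n, ℂ))))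
    (Atilde : Set C(X, ℂ))
    (hAtilde : Atilde = {f : C(X, ℂ) | ∀ n, f.restrict (K n) ∈ A n})
    (hsep : ∀ x y : X, x ≠ y → ∃ f ∈ Atilde, f x ≠ f y)
    (hrestr : ∀ n, (fun f : C(X, ℂ) => f.restrict (K n)) '' Atilde = (A n : Set C(K n, ℂ))) :
    IsDirichletSet Atilde := by
  classical
  rw [IsDirichletSet, Metric.dense_iff]
  intro u r hr
  obtain ⟨w, hwball, hwE⟩ :=
    Metric.dense_iff.1 (Econst_dense hcpt hdisj hdiam) u (r / 2) (by linarith)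
  obtain ⟨F, hwF⟩ := hwE
  have hwu : dist w u < r / 2 := Metric.mem_ball.1 hwball
  set ε' : ℝ := r / (8 * (F.card + 1)) with hε'
  have hε'pos : 0 < ε' := by positivity
  -- for each m, choose fₘ ∈ Ã approximating w on K m
  have hdata : ∀ m : ℕ, ∃ f : C(X, ℂ), f ∈ Atilde ∧
      ∀ y : K m, |(f (y : X)).re - w (y : X)| < ε' := by
    intro m
    haveI : CompactSpace (K m) := isCompact_iff_compactSpace.mp (hcpt m)
    have hdm := hADir m
    rw [IsDirichletSet] at hdm
    obtain ⟨u', hu'ball, g, hgA, hgre⟩ :=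
      Metric.dense_iff.1 hdm (w.restrict (K m)) ε' hε'pos
    have hgim : g ∈ (fun f : C(X, ℂ) => f.restrict (K m)) '' Atilde := by
      rw [hrestr m]; exact hgA
    obtain ⟨f, hfA, hfr⟩ := hgim
    refine ⟨f, hfA, fun y => ?_⟩
    have h1 : (f (y : X)).re = u' y := by
      rw [hgre y, ← hfr]; rfl
    have h2 : dist (u' y) (w.restrict (K m) y) ≤ dist u' (w.restrict (K m)) :=
      ContinuousMap.dist_apply_le_dist y
    rw [h1, ← Real.dist_eq]
    calc dist (u' y) (w (y : X)) = dist (u' y) (w.restrict (K m) y) := rfl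
    _ ≤ dist u' (w.restrict (K m)) := h2
    _ < ε' := Metric.mem_ball.1 hu'ball
  choose fm hfmA hfm using hdata
  -- radii for the bump functions
  have hO : ∀ m : ℕ, ∃ θ > 0,
      (Metric.thickening θ (K m) ⊆ {x | |(fm m x).re - w x| < 2 * ε'}) ∧
      ∀ j ∈ F.erase m, ∀ x ∈ K j, x ∉ Metric.thickening θ (K m) := by
    intro m
    have hOopen : IsOpen {x : X | |(fm m x).re - w x| < 2 * ε'} :=
      isOpen_lt (((Complex.continuous_re.comp (fm m).continuous).sub w.continuous).abs)
        continuous_const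
    have hKO : K m ⊆ {x : X | |(fm m x).re - w x| < 2 * ε'} := by
      intro x hx
      have := hfm m ⟨x, hx⟩
      simp only [mem_setOf_eq]
      calc |(fm m x).re - w x| < ε' := this
      _ < 2 * ε' := by linarith
    obtain ⟨η, hη, hηsub⟩ := (hcpt m).exists_thickening_subset_open hOopen hKO
    set L : Set X := ⋃ j ∈ F.erase m, K j with hL
    have hLc : IsClosed L :=
      (F.erase m).finite_toSet.isClosed_biUnion fun j _ => (hcpt j).isClosed
    have hdL : Disjoint (K m) L := by
      rw [Set.disjoint_right]
      simp only [hL, mem_iUnion]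
      rintro x ⟨j, hj, hxj⟩ hxm
      exact (hdisj (Finset.ne_of_mem_erase hj)).le_bot ⟨hxj, hxm⟩
    obtain ⟨δ, hδ, hδd⟩ := hdL.exists_thickenings (hcpt m) hLc
    refine ⟨min η δ, lt_min hη hδ, ?_, ?_⟩
    · exact (Metric.thickening_mono (min_le_left _ _) _).trans hηsub
    · intro j hj x hxj hxt
      have hx1 : x ∈ Metric.thickening δ (K m) :=
        Metric.thickening_mono (min_le_right _ _) _ hxt
      have hx2 : x ∈ Metric.thickening δ L :=
        Metric.self_subset_thickening hδ _ (mem_biUnion hj hxj)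
      exact hδd.le_bot ⟨hx1, hx2⟩
  choose θ hθpos hθO hθsep using hO
  -- bump functions
  have hφ : ∀ m : ℕ, ∃ φ : C(X, ℝ), (∀ x, φ x ∈ Icc (0:ℝ) 1) ∧ EqOn φ 1 (K m) ∧
      (∀ x, x ∉ Metric.thickening (θ m) (K m) → φ x = 0) ∧
      ∀ j, ∀ a ∈ K j, ∀ b ∈ K j, φ a = φ b := by
    intro m
    have hKsub : K m ⊆ Metric.thickening (θ m) (K m) :=
      Metric.self_subset_thickening (hθpos m) _
    have hd : Disjoint (ksat K univ (Metric.thickening (θ m) (K m))ᶜ) (K m) := by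
      rw [Set.disjoint_right]
      rintro z hzm (hz | hz)
      · exact hz (hKsub hzm)
      · simp only [mem_iUnion] at hz
        obtain ⟨j, ⟨-, c, hcK, hcT⟩, hzj⟩ := hz
        rcases kmem_eq hdisj hzj hzm with rfl
        exact hcT (hKsub hcK)
    have hsat1 : KSaturated K univ (K m) := by
      rintro a b (rfl | ⟨j, -, haj, hbj⟩) ha
      · exact ha
      · rcases kmem_eq hdisj haj ha with rfl
        exact hbj
    obtain ⟨h, h0, h1, h01, hconst⟩ :=
      exists_urysohn_saturated hcpt hdisj hdiam
        (isClosed_ksat hcpt hdiam Metric.isOpen_thickening.isClosed_compl)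
        (hcpt m).isClosed (ksat_saturated hdisj _) hsat1 hd
    exact ⟨h, h01, h1, fun x hx => h0 (subset_ksat _ hx), fun j => hconst j (mem_univ j)⟩
  choose φ hφ01 hφ1 hφ0 hφconst using hφ
  have hφ0' : ∀ m, ∀ j ∈ F.erase m, ∀ x ∈ K j, φ m x = 0 :=
    fun m j hj x hx => hφ0 m x (hθsep m j hj x hx)
  set cm : C(ℝ, ℂ) := ⟨Complex.ofReal, Complex.continuous_ofReal⟩ with hcm
  set f : C(X, ℂ) :=
    cm.comp w * (1 - ∑ m ∈ F, cm.comp (φ m)) + ∑ m ∈ F, cm.comp (φ m) * fm m with hf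
  -- membership of f in Atilde
  have hfA : f ∈ Atilde := by
    rw [hAtilde]
    intro j
    set R : C(X, ℂ) →ₐ[ℂ] C(K j, ℂ) :=
      ContinuousMap.compRightAlgHom ℂ ℂ ⟨Subtype.val, continuous_subtype_val⟩ with hR
    have hRr : ∀ g : C(X, ℂ), g.restrict (K j) = R g := fun g => rfl
    have hconstmem : ∀ ψ : C(X, ℝ), (∀ a ∈ K j, ∀ b ∈ K j, ψ a = ψ b) →
        R (cm.comp ψ) ∈ A j := by
      intro ψ hcc
      obtain ⟨c, hc⟩ := const_on_of_eq hcc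
      have heq : R (cm.comp ψ) = algebraMap ℂ C(K j, ℂ) (c : ℂ) := by
        ext y
        simp [hR, hcm, ContinuousMap.compRightAlgHom, hc (y : X) y.2]
      rw [heq]
      exact Subalgebra.algebraMap_mem _ _
    have hfmmem : ∀ m, R (fm m) ∈ A j := by
      intro m
      have hm := hfmA m
      rw [hAtilde] at hm
      rw [← hRr]
      exact hm j
    show R f ∈ A j
    rw [hf, map_add, map_mul, map_sum]
    have hsum2 : (∑ m ∈ F, R (cm.comp (φ m) * fm m)) ∈ A j := by
      refine Subalgebra.sum_mem _ fun m _ => ?_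
      rw [map_mul]
      exact (A j).mul_mem (hconstmem (φ m) (hφconst m j)) (hfmmem m)
    refine (A j).add_mem ?_ hsum2
    by_cases hjF : j ∈ F
    · have hzero : R (1 - ∑ m ∈ F, cm.comp (φ m)) = 0 := by
        ext y
        have hsum1 : ∑ m ∈ F, φ m (y : X) = 1 := by
          rw [Finset.sum_eq_single j (fun m _ hne => hφ0' m j
            (Finset.mem_erase.2 ⟨Ne.symm hne, hjF⟩) (y : X) y.2) (fun h => absurd hjF h)]
          exact hφ1 j y.2
        simp [hR, ContinuousMap.compRightAlgHom, hcm, ← Complex.ofReal_sum, hsum1]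
      rw [hzero, mul_zero]
      exact (A j).zero_mem
    · have hwcj : ∀ a ∈ K j, ∀ b ∈ K j, w a = w b := by
        obtain ⟨c, hc⟩ := hwF j hjF
        intro a ha b hb
        rw [hc a ha, hc b hb]
      refine (A j).mul_mem (hconstmem w hwcj) ?_
      rw [map_sub, map_one, map_sum]
      refine (A j).sub_mem ((A j).one_mem) (Subalgebra.sum_mem _ fun m _ => ?_)
      exact hconstmem (φ m) (hφconst m j)
  -- pointwise estimate
  have hest : ∀ x : X, |(f x).re - w x| ≤ (F.card : ℝ) * (2 * ε') := by
    intro x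
    have hfx : (f x).re = w x * (1 - ∑ m ∈ F, φ m x) + ∑ m ∈ F, φ m x * (fm m x).re := by
      simp only [hf, ContinuousMap.add_apply, ContinuousMap.mul_apply,
        ContinuousMap.sub_apply, ContinuousMap.one_apply, ContinuousMap.sum_apply,
        ContinuousMap.comp_apply, ContinuousMap.coe_mk, hcm]
      rw [Complex.add_re, Complex.re_sum]
      congr 1
      · rw [← Complex.ofReal_sum, ← Complex.ofReal_one, ← Complex.ofReal_sub,
          Complex.re_ofReal_mul, Complex.ofReal_re]
      · exact Finset.sum_congr rfl fun m _ => Complex.re_ofReal_mul _ _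
    have hid : (f x).re - w x = ∑ m ∈ F, φ m x * ((fm m x).re - w x) := by
      have hs : ∑ m ∈ F, φ m x * ((fm m x).re - w x) =
          (∑ m ∈ F, φ m x * (fm m x).re) - (∑ m ∈ F, φ m x) * w x := by
        rw [Finset.sum_mul, ← Finset.sum_sub_distrib]
        exact Finset.sum_congr rfl fun m _ => by ring
      rw [hfx, hs]; ring
    rw [hid]
    calc |∑ m ∈ F, φ m x * ((fm m x).re - w x)| ≤
        ∑ m ∈ F, |φ m x * ((fm m x).re - w x)| := Finset.abs_sum_le_sum_abs _ _
    _ ≤ ∑ m ∈ F, 2 * ε' := by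
        refine Finset.sum_le_sum fun m _ => ?_
        by_cases hz : φ m x = 0
        · simp [hz]; positivity
        · have hxT : x ∈ Metric.thickening (θ m) (K m) := by
            by_contra hc
            exact hz (hφ0 m x hc)
          have hdlt : |(fm m x).re - w x| < 2 * ε' := hθO m hxT
          have h1 : |φ m x| ≤ 1 := by
            rw [abs_of_nonneg (hφ01 m x).1]; exact (hφ01 m x).2
          rw [abs_mul]
          calc |φ m x| * |(fm m x).re - w x| ≤ 1 * (2 * ε') :=
            mul_le_mul h1 hdlt.le (abs_nonneg _) zero_le_one
          _ = 2 * ε' := one_mul _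
    _ = (F.card : ℝ) * (2 * ε') := by rw [Finset.sum_const, nsmul_eq_mul]
  -- assemble
  set v : C(X, ℝ) := ⟨fun x => (f x).re, Complex.continuous_re.comp f.continuous⟩ with hv
  have hvw : dist v w ≤ (F.card : ℝ) * (2 * ε') := by
    refine (ContinuousMap.dist_le (by positivity)).2 fun x => ?_
    rw [Real.dist_eq]
    exact hest x
  have hkey : (F.card : ℝ) * (2 * ε') ≤ r / 4 := by
    have hq : (0:ℝ) ≤ (F.card : ℝ) := Nat.cast_nonneg _
    have hq1 : (0:ℝ) < (F.card : ℝ) + 1 := by linarith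
    rw [hε']
    rw [show (F.card : ℝ) * (2 * (r / (8 * ((F.card : ℝ) + 1)))) =
      ((F.card : ℝ) * r) / (4 * ((F.card : ℝ) + 1)) by field_simp; ring]
    rw [div_le_div_iff₀ (by positivity) (by norm_num : (0:ℝ) < 4)]
    nlinarith
  refine ⟨v, Metric.mem_ball.2 ?_, f, hfA, fun y => rfl⟩
  calc dist v u ≤ dist v w + dist w u := dist_triangle _ _ _
  _ ≤ r / 4 + dist w u := by linarith [hvw.trans hkey]
  _ < r / 4 + r / 2 := by linarith
  _ < r := by linarith
end
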